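/- The domain of definite Boolean functions over n variables, together with the bottom element (the function with empty model set), contains a chain of length 2^n: there exists a strictly monotone (with respect to strict set inclusion) sequence g : Fin (2^n) → Set (Fin n → Bool) of model sets such that g 0 = ∅ and, for every index k ≠ 0, the set g k contains the all-ones model ⊤ and is closed under intersection. -/

import Mathlib

/-- The pointwise intersection (Boolean AND) of two models. -/
def minter {n : ℕ} (M₁ M₂ : Fin n → Bool) : Fin n → Bool :=
  fun i => M₁ i && M₂ i

/-- A set of models is closed under intersection. -/
def ClosedUnderInter {n : ℕ} (S : Set (Fin n → Bool)) : Prop :=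
  ∀ M₁ ∈ S, ∀ M₂ ∈ S, minter M₁ M₂ ∈ S

/-- Binary value of a model. -/
def mval {n : ℕ} (M : Fin n → Bool) : ℕ :=
  ∑ i : Fin n, if M i then 2 ^ (i : ℕ) else 0

lemma mval_minter_le {n : ℕ} (M₁ M₂ : Fin n → Bool) :
    mval (minter M₁ M₂) ≤ mval M₁ := by
  apply Finset.sum_le_sum
  intro i _
  by_cases h : M₁ i
  · split <;> simp [h]
  · simp [minter, h]

lemma mval_top {n : ℕ} : mval (fun _ : Fin n => true) = 2 ^ n - 1 := by
  induction n with
  | zero => simp [mval]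
  | succ m ih =>
    rw [mval, Fin.sum_univ_castSucc]
    have : (∑ i : Fin m, if (fun _ : Fin (m+1) => true) (Fin.castSucc i) then
        2 ^ ((Fin.castSucc i : Fin (m+1)) : ℕ) else 0) = mval (fun _ : Fin m => true) := by
      apply Finset.sum_congr rfl; intro i _; simp
    rw [this, ih]
    simp [pow_succ]
    have h1 : 1 ≤ 2 ^ m := Nat.one_le_two_pow
    omega

lemma mval_bits {n : ℕ} (k : ℕ) (hk : k < 2 ^ n) :
    mval (fun i : Fin n => k.testBit (i : ℕ)) = k := by
  induction n generalizing k with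
  | zero => simp [mval]; omega
  | succ m ih =>
    rw [mval, Fin.sum_univ_succ]
    have h1 : (∑ i : Fin m, if k.testBit ((Fin.succ i : Fin (m+1)) : ℕ) then
        2 ^ ((Fin.succ i : Fin (m+1)) : ℕ) else 0)
        = 2 * mval (fun i : Fin m => (k / 2).testBit (i : ℕ)) := by
      rw [mval, Finset.mul_sum]
      apply Finset.sum_congr rfl
      intro i _
      have : k.testBit ((i : ℕ) + 1) = (k / 2).testBit (i : ℕ) := by
        rw [Nat.testBit_add_one]
      simp only [Fin.val_succ, this]
      split <;> ring_nf
    rw [h1, ih (k / 2) (by omega)]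
    have h0 : (if k.testBit ((0 : Fin (m+1)) : ℕ) then 2 ^ ((0 : Fin (m+1)) : ℕ) else 0) = k % 2 := by
      rcases Nat.mod_two_eq_zero_or_one k with h | h <;>
        simp [Nat.testBit_zero, h]
    rw [h0]; omega

/-- The domain of definite Boolean functions over `n` variables, together with
the bottom element (empty model set), contains a chain of length `2^n`: a
strictly increasing (w.r.t. strict inclusion) sequence of model sets starting
with `∅`, all of whose other members contain the all-ones model and are closed
under intersection. -/
theorem def_chain (n : ℕ) :
    ∃ g : Fin (2 ^ n) → Set (Fin n → Bool),
      StrictMono g ∧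
      g 0 = ∅ ∧
      ∀ k : Fin (2 ^ n), k ≠ 0 →
        (fun _ => true) ∈ g k ∧ ClosedUnderInter (g k) := by
  have hpos : 0 < 2 ^ n := Nat.pow_pos (by norm_num)
  refine ⟨fun k => {M | mval M < (k : ℕ) ∨ ((k : ℕ) ≠ 0 ∧ M = fun _ => true)}, ?_, ?_, ?_⟩
  · intro k k' hkk'
    have hlt : (k : ℕ) < (k' : ℕ) := hkk'
    constructor
    · intro M hM
      rcases hM with h | ⟨h1, h2⟩
      · exact Or.inl (lt_trans h hlt)
      · exact Or.inr ⟨by omega, h2⟩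
    · intro hsub
      by_cases hk0 : (k : ℕ) = 0
      · -- top is in g k', not in g k
        have : (fun _ : Fin n => true) ∈ {M | mval M < (k' : ℕ) ∨ ((k' : ℕ) ≠ 0 ∧ M = fun _ => true)} :=
          Or.inr ⟨by omega, rfl⟩
        have h2 := hsub this
        rcases h2 with h | ⟨h1, _⟩ <;> omega
      · -- the model with value (k:ℕ) is in g k' but not in g k
        have hklt : (k : ℕ) < 2 ^ n := k.isLt
        set M : Fin n → Bool := fun i => (k : ℕ).testBit (i : ℕ) with hM
        have hv : mval M = (k : ℕ) := mval_bits _ hklt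
        have : M ∈ {M | mval M < (k' : ℕ) ∨ ((k' : ℕ) ≠ 0 ∧ M = fun _ => true)} :=
          Or.inl (by omega)
        have h2 := hsub this
        rcases h2 with h | ⟨h1, h2⟩
        · omega
        · rw [h2] at hv
          rw [mval_top] at hv
          have : (k' : ℕ) < 2 ^ n := k'.isLt
          omega
  · ext M
    simp
  · intro k hk
    have hk0 : (k : ℕ) ≠ 0 := by
      intro h; apply hk; exact Fin.ext (by simp [h])
    refine ⟨Or.inr ⟨hk0, rfl⟩, ?_⟩
    intro M₁ hM₁ M₂ hM₂
    rcases hM₁ with h1 | ⟨_, h1⟩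
    · exact Or.inl (lt_of_le_of_lt (mval_minter_le M₁ M₂) h1)
    · rcases hM₂ with h2 | ⟨_, h2⟩
      · have : minter M₁ M₂ = M₂ := by
          funext i; simp [minter, h1]
        rw [this]; exact Or.inl h2
      · have : minter M₁ M₂ = fun _ => true := by
          funext i; simp [minter, h1, h2]
        rw [this]; exact Or.inr ⟨hk0, rfl⟩
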